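/- Assume p ≡ 3 (mod 4). Then there is exactly one λ ∈ K̄ satisfying −λ(1)·λ(−1) = 1, and this λ has order 2. -/

import Mathlib

instance (X : Type*) [DecidableEq X] : DecidableEq (OnePoint X) :=
  inferInstanceAs (DecidableEq (Option X))

/-- The translation `z ↦ z + a` on `ℤ/p ∪ {∞}`, fixing `∞`. -/
def ptrans (p : ℕ) (a : ZMod p) : Equiv.Perm (OnePoint (ZMod p)) :=
  Equiv.optionCongr (Equiv.addRight a)

/-- The map `z ↦ a z` on `ℤ/p ∪ {∞}`, fixing `∞`, for `a ≠ 0`. -/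
def pmul (p : ℕ) [Fact p.Prime] (a : ZMod p) (ha : a ≠ 0) : Equiv.Perm (OnePoint (ZMod p)) :=
  Equiv.optionCongr (Equiv.mulLeft₀ a ha)

/-- Multiplication by `a` extended to `ℤ/p ∪ {∞}` (with `a·∞ = ∞`). -/
def opSmul (p : ℕ) (a : ZMod p) : OnePoint (ZMod p) → OnePoint (ZMod p) :=
  fun x => Option.map (fun z => a * z) x

/-- Underlying function of the map `z ↦ -1/z`. -/
def negInvFun (p : ℕ) : OnePoint (ZMod p) → OnePoint (ZMod p)
  | Option.none => Option.some (0 : ZMod p)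
  | Option.some z => if z = 0 then Option.none else Option.some (-z⁻¹ : ZMod p)

/-- The permutation `z ↦ -1/z` of `ℤ/p ∪ {∞}` (sending `0 ↦ ∞` and `∞ ↦ 0`). -/
def negInvPerm (p : ℕ) [Fact p.Prime] : Equiv.Perm (OnePoint (ZMod p)) :=
  Function.Involutive.toPerm (negInvFun p) (by
    intro x
    match x with
    | Option.none => simp [negInvFun]; rfl
    | Option.some z =>
      by_cases hz : z = 0
      · simp [negInvFun, hz]; rfl
      · have h1 : (-z⁻¹ : ZMod p) ≠ 0 := by simp [hz]
        simp [negInvFun, hz, h1, inv_neg, inv_inv]; rfl)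

/-- The involution `(0 ∞)(1 3)(2 6)(4 5)`. -/
def inv1 (p : ℕ) : Equiv.Perm (OnePoint (ZMod p)) :=
  Equiv.swap ((0 : ZMod p) : OnePoint (ZMod p)) OnePoint.infty *
  Equiv.swap ((1 : ZMod p) : OnePoint (ZMod p)) ((3 : ZMod p) : OnePoint (ZMod p)) *
  Equiv.swap ((2 : ZMod p) : OnePoint (ZMod p)) ((6 : ZMod p) : OnePoint (ZMod p)) *
  Equiv.swap ((4 : ZMod p) : OnePoint (ZMod p)) ((5 : ZMod p) : OnePoint (ZMod p))

/-- The involution `(0 ∞)(1 5)(2 3)(4 6)`. -/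
def inv2 (p : ℕ) : Equiv.Perm (OnePoint (ZMod p)) :=
  Equiv.swap ((0 : ZMod p) : OnePoint (ZMod p)) OnePoint.infty *
  Equiv.swap ((1 : ZMod p) : OnePoint (ZMod p)) ((5 : ZMod p) : OnePoint (ZMod p)) *
  Equiv.swap ((2 : ZMod p) : OnePoint (ZMod p)) ((3 : ZMod p) : OnePoint (ZMod p)) *
  Equiv.swap ((4 : ZMod p) : OnePoint (ZMod p)) ((6 : ZMod p) : OnePoint (ZMod p))

/-- The set of nonzero squares in `ℤ/p`. -/
def Rset (p : ℕ) : Set (ZMod p) := {a | a ≠ 0 ∧ IsSquare a}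

/-- The set of nonsquares in `(ℤ/p)*`. -/
def Nset (p : ℕ) : Set (ZMod p) := {a | a ≠ 0 ∧ ¬ IsSquare a}

/-!
The stabiliser of `∞` in `G` has order `p (p - 1) / 2` and contains the translations as a
normal Sylow `p`-subgroup, so every element of `G` fixing `0` and `∞` is a multiplication
`z ↦ c z`. The admissible `c` form a subgroup `C` of index 2 in `(ℤ/p)ˣ`, of odd order
`(p - 1) / 2` because `p ≡ 3 (mod 4)`; in particular `-1 ∉ C`. Conjugation by `λ ∈ K̄` maps
multiplications in `G` to multiplications in `G`, so `λ (c z) = c' λ z` with `c, c' ∈ C`.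
Hence `-λ(1) λ(-1) ∈ C` and `λ(z) λ(-1/z) = λ(1) λ(-1)` for all `z ≠ 0`.

Fixing one `τ ∈ K̄`, the elements of `K̄` are the maps `z ↦ c τ(z)` with `c ∈ C`, and the
normalisation `-λ(1) λ(-1) = 1` becomes `c² = (-τ(1) τ(-1))⁻¹`, which has exactly one solution
in the odd-order group `C`. Finally `λ²` fixes `0` and `∞`, so it is `z ↦ d z` with `d ∈ C`;
the product identity at `z = λ(1)` gives `d² = 1`, hence `d = 1`.
-/

open Equiv MulAction
open scoped OnePoint

theorem Subgroup.card_inf_stabilizer_mul_ncard_orbit {Γ α : Type*} [Group Γ] [MulAction Γ α]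
    (H : Subgroup Γ) (x : α) :
    Nat.card ↥(H ⊓ stabilizer Γ x) * (orbit H x).ncard = Nat.card H := by
  rw [← index_stabilizer, ← (stabilizer H x).card_mul_index,
    ← Nat.card_congr (subgroupOfEquivOfLe inf_le_left).toEquiv, inf_subgroupOf_left]
  rfl

theorem Subgroup.normal_of_card_eq_prime {H : Type*} [Group H] [Finite H] {p m : ℕ}
    [Fact p.Prime] (P : Subgroup H) (hP : Nat.card P = p) (hH : Nat.card H = p * m)
    (hm : m < p) : P.Normal := by
  have hp := (Fact.out : p.Prime)
  have hm0 : m ≠ 0 := by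
    rintro rfl
    exact Nat.card_pos.ne' (hH.trans (mul_zero p))
  have hfac : (Nat.card H).factorization p = 1 := by
    rw [hH, Nat.factorization_mul hp.ne_zero hm0, Finsupp.add_apply, hp.factorization_self,
      Nat.factorization_eq_zero_of_not_dvd fun h => (Nat.le_of_dvd (by omega) h).not_gt hm]
  let S : Sylow p H := .ofCard P (by rw [hP, hfac, pow_one])
  have hindex : (S : Subgroup H).index = m := by
    have := (S : Subgroup H).card_mul_index
    rw [Sylow.coe_ofCard, hP, hH] at this
    exact Nat.eq_of_mul_eq_mul_left hp.pos this
  have hcard : Nat.card (Sylow p H) = 1 := by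
    have hle := Nat.le_of_dvd (by omega) (hindex ▸ S.card_dvd_index)
    have := card_sylow_modEq_one p H
    rwa [Nat.ModEq, Nat.mod_eq_of_lt (by omega), Nat.mod_eq_of_lt hp.one_lt] at this
  have : Subsingleton (Sylow p H) := (Nat.card_eq_one_iff_unique.mp hcard).1
  exact Sylow.coe_ofCard (p := p) P _ ▸ Sylow.normal_of_subsingleton S

theorem Subgroup.existsUnique_sq_eq_of_odd_card {H : Type*} [Group H] {C : Subgroup H}
    (hC : Odd (Nat.card C)) {w : H} (hw : w ∈ C) : ∃! c, c ∈ C ∧ c ^ 2 = w := by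
  have hbij := Nat.Coprime.pow_left_bijective (Nat.coprime_two_right.mpr hC)
  obtain ⟨c, hc⟩ := hbij.2 ⟨w, hw⟩
  refine ⟨c, ⟨c.2, congrArg Subtype.val hc⟩, fun d ⟨hdC, hd⟩ => ?_⟩
  exact congrArg Subtype.val
    (hbij.1 (a₁ := ⟨d, hdC⟩) (Subtype.ext (hd.trans (congrArg Subtype.val hc).symm)))

theorem Subgroup.eq_one_of_sq_eq_one_of_odd_card {H : Type*} [Group H] {C : Subgroup H}
    (hC : Odd (Nat.card C)) {c : H} (hc : c ∈ C) (h : c ^ 2 = 1) : c = 1 :=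
  (C.existsUnique_sq_eq_of_odd_card hC C.one_mem).unique ⟨hc, h⟩ ⟨C.one_mem, one_pow 2⟩

lemma Nat.pow_three_sub_self_div_two {p : ℕ} (hp : Odd p) :
    (p ^ 3 - p) / 2 = p * ((p - 1) / 2) * (p + 1) := by
  obtain ⟨k, rfl⟩ := hp
  have h : (2 * k + 1) ^ 3 - (2 * k + 1) = 2 * ((2 * k + 1) * k * (2 * k + 1 + 1)) :=
    Nat.sub_eq_of_eq_add (by ring)
  rw [h, Nat.mul_div_cancel_left _ two_pos, Nat.add_sub_cancel,
    Nat.mul_div_cancel_left _ two_pos]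

section

variable {p : ℕ}

local notation "𝕏" => OnePoint (ZMod p)

@[simp] lemma ptrans_coe (a z : ZMod p) : ptrans p a z = ↑(z + a) := rfl

@[simp] lemma ptrans_infty (a : ZMod p) : ptrans p a ∞ = ∞ := rfl

def ptransHom (p : ℕ) : Multiplicative (ZMod p) →* Perm (OnePoint (ZMod p)) where
  toFun a := ptrans p a.toAdd
  map_one' := by ext x; induction x using OnePoint.rec <;> simp
  map_mul' a b := by
    ext x
    induction x using OnePoint.rec
    · rfl
    · simp only [toAdd_mul, ptrans_coe, Perm.mul_apply, add_assoc, add_comm a.toAdd]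

@[simp] lemma ptransHom_apply (a : Multiplicative (ZMod p)) : ptransHom p a = ptrans p a.toAdd :=
  rfl

lemma ptransHom_injective : Function.Injective (ptransHom p) := fun a b h => by
  simpa using congrArg (· ((0 : ZMod p) : 𝕏)) h

lemma ptrans_pow (a : ZMod p) (n : ℕ) : ptrans p a ^ n = ptrans p (n • a) := by
  simpa using (map_pow (ptransHom p) (.ofAdd a) n).symm

lemma apply_coe_eq_mul_of_conj_ptrans_one [NeZero p] {g : Perm 𝕏}
    (h0 : g (0 : ZMod p) = (0 : ZMod p)) {c : ZMod p} (hc : g * ptrans p 1 * g⁻¹ = ptrans p c)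
    (z : ZMod p) : g z = ↑(c * z) := by
  have hz : g * ptrans p z * g⁻¹ = ptrans p (c * z) := by
    conv_lhs => rw [← ZMod.natCast_zmod_val z, ← nsmul_one, ← ptrans_pow, ← conj_pow, hc]
    rw [ptrans_pow, nsmul_eq_mul, ZMod.natCast_zmod_val, mul_comm]
  simpa [g.symm_apply_eq.mpr h0.symm] using congrArg (· ((0 : ZMod p) : 𝕏)) hz

lemma card_onePoint [NeZero p] : Nat.card 𝕏 = p + 1 :=
  (Finite.card_option (α := ZMod p)).trans (by rw [Nat.card_zmod])

structure IsPSL2Like (G : Subgroup (Perm 𝕏)) : Prop where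
  exists_apply_eq : ∀ x y : 𝕏, ∃ g ∈ G, g x = y
  card_eq : Nat.card G = (p ^ 3 - p) / 2
  ptrans_mem : ∀ a : ZMod p, ptrans p a ∈ G

def kbar (G : Subgroup (Perm 𝕏)) : Set (Perm 𝕏) :=
  {g | g ∈ G ∧ g ((0 : ZMod p) : 𝕏) = ∞ ∧ g ∞ = ((0 : ZMod p) : 𝕏)}

def IsNormalized (g : Perm 𝕏) : Prop :=
  ∃ u v : ZMod p, g ((1 : ZMod p) : 𝕏) = u ∧ g ((-1 : ZMod p) : 𝕏) = v ∧ -(u * v) = 1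

lemma inv_mem_kbar {G : Subgroup (Perm 𝕏)} {g : Perm 𝕏} (hg : g ∈ kbar G) : g⁻¹ ∈ kbar G :=
  ⟨inv_mem hg.1, Perm.inv_eq_iff_eq.mpr hg.2.2.symm, Perm.inv_eq_iff_eq.mpr hg.2.1.symm⟩

variable [Fact p.Prime]

@[simp] lemma pmul_coe (a z : ZMod p) (ha : a ≠ 0) : pmul p a ha z = ↑(a * z) := rfl

@[simp] lemma pmul_infty (a : ZMod p) (ha : a ≠ 0) : pmul p a ha ∞ = ∞ := rfl

variable (p) in
def unitsMulHom : (ZMod p)ˣ →* Perm 𝕏 where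
  toFun u := pmul p u u.ne_zero
  map_one' := by ext x; induction x using OnePoint.rec <;> simp
  map_mul' a b := by ext x; induction x using OnePoint.rec <;> simp [mul_assoc]

@[simp] lemma unitsMulHom_coe (u : (ZMod p)ˣ) (z : ZMod p) :
    unitsMulHom p u z = ↑(u * z : ZMod p) :=
  rfl

@[simp] lemma unitsMulHom_infty (u : (ZMod p)ˣ) : unitsMulHom p u ∞ = ∞ := rfl

lemma unitsMulHom_injective : Function.Injective (unitsMulHom p) := fun a b h => by
  simpa [Units.ext_iff] using congrArg (· ((1 : ZMod p) : 𝕏)) h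

def multipliers (G : Subgroup (Perm 𝕏)) : Subgroup (ZMod p)ˣ := G.comap (unitsMulHom p)

lemma mem_multipliers {G : Subgroup (Perm 𝕏)} {u : (ZMod p)ˣ} :
    u ∈ multipliers G ↔ unitsMulHom p u ∈ G :=
  Iff.rfl

lemma exists_apply_coe_eq_units {g : Perm 𝕏} (h0 : g ((0 : ZMod p) : 𝕏) = ∞)
    (hinf : g ∞ = ((0 : ZMod p) : 𝕏)) {z : ZMod p} (hz : z ≠ 0) :
    ∃ w : (ZMod p)ˣ, g z = ((w : ZMod p) : 𝕏) := by
  obtain ⟨w, hw⟩ := OnePoint.ne_infty_iff_exists.mp fun h =>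
    hz (OnePoint.coe_injective (g.injective (h.trans h0.symm)))
  refine ⟨.mk0 w fun hw0 => OnePoint.coe_ne_infty z (g.injective ?_), hw.symm⟩
  rw [← hw, hw0, hinf]

lemma SemiconjBy.apply_coe_mul {g : Perm 𝕏} {b c : (ZMod p)ˣ}
    (h : SemiconjBy g (unitsMulHom p b) (unitsMulHom p c)) {x y : ZMod p} (hxy : g x = y) :
    g ↑(b * x : ZMod p) = ↑(c * y : ZMod p) := by
  simpa [hxy] using DFunLike.congr_fun h.eq (x : 𝕏)

lemma mul_mem_kbar {G : Subgroup (Perm 𝕏)} {τ : Perm 𝕏} (hτ : τ ∈ kbar G) {c : (ZMod p)ˣ}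
    (hc : c ∈ multipliers G) : unitsMulHom p c * τ ∈ kbar G :=
  ⟨mul_mem hc hτ.1, by simp [hτ.2.1], by simp [hτ.2.2]⟩

lemma isNormalized_mul_iff {τ : Perm 𝕏} {x y : (ZMod p)ˣ}
    (hx : τ ((1 : ZMod p) : 𝕏) = ↑(x : ZMod p)) (hy : τ ((-1 : ZMod p) : 𝕏) = ↑(y : ZMod p))
    (c : (ZMod p)ˣ) :
    IsNormalized (unitsMulHom p c * τ) ↔ c ^ 2 = (-(x * y))⁻¹ := by
  have h1 : (unitsMulHom p c * τ) ((1 : ZMod p) : 𝕏) = ↑((c * x : (ZMod p)ˣ) : ZMod p) := by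
    simp [hx]
  have h2 : (unitsMulHom p c * τ) ((-1 : ZMod p) : 𝕏) = ↑((c * y : (ZMod p)ˣ) : ZMod p) := by
    simp [hy]
  have hnorm : IsNormalized (unitsMulHom p c * τ) ↔
      -((c * x : (ZMod p)ˣ) * (c * y : (ZMod p)ˣ) : ZMod p) = 1 := by
    constructor
    · rintro ⟨u, v, hu, hv, huv⟩
      rwa [OnePoint.coe_injective (h1.symm.trans hu), OnePoint.coe_injective (h2.symm.trans hv)]
    · exact fun h => ⟨_, _, h1, h2, h⟩
  have hsq : -(c * x * (c * y)) = c ^ 2 * -(x * y) := by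
    ext
    push_cast
    ring
  rw [hnorm, ← Units.val_mul, ← Units.val_neg, Units.val_eq_one, hsq, eq_inv_iff_mul_eq_one]

namespace IsPSL2Like

variable {G : Subgroup (Perm (OnePoint (ZMod p)))}

lemma card_inf_stabilizer_infty (hG : IsPSL2Like G) (hp : p ≠ 2) :
    Nat.card ↥(G ⊓ stabilizer (Perm 𝕏) (∞ : 𝕏)) = p * ((p - 1) / 2) := by
  have horbit : orbit G (∞ : 𝕏) = Set.univ := Set.eq_univ_of_forall fun y => by
    obtain ⟨g, hg, rfl⟩ := hG.exists_apply_eq ∞ y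
    exact ⟨⟨g, hg⟩, rfl⟩
  have h := G.card_inf_stabilizer_mul_ncard_orbit (∞ : 𝕏)
  rw [horbit, Set.ncard_univ, hG.card_eq, Nat.pow_three_sub_self_div_two
    ((Fact.out : p.Prime).odd_of_ne_two hp), card_onePoint] at h
  exact Nat.eq_of_mul_eq_mul_right p.succ_pos h

lemma card_inf_stabilizer_infty_inf_stabilizer_zero (hG : IsPSL2Like G) (hp : p ≠ 2) :
    Nat.card ↥(G ⊓ stabilizer (Perm 𝕏) (∞ : 𝕏) ⊓ stabilizer (Perm 𝕏) ((0 : ZMod p) : 𝕏)) =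
      (p - 1) / 2 := by
  have horbit : orbit ↥(G ⊓ stabilizer (Perm 𝕏) (∞ : 𝕏)) ((0 : ZMod p) : 𝕏) =
      Set.range ((↑) : ZMod p → 𝕏) := by
    ext y
    constructor
    · rintro ⟨⟨g, -, hginf⟩, rfl⟩
      refine OnePoint.ne_infty_iff_exists.mp fun h => OnePoint.coe_ne_infty (0 : ZMod p) ?_
      exact g.injective (h.trans hginf.symm)
    · rintro ⟨z, rfl⟩
      exact ⟨⟨ptrans p z, hG.ptrans_mem z, rfl⟩, by simp [Subgroup.smul_def, Perm.smul_def]⟩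
  have h := (G ⊓ stabilizer (Perm 𝕏) (∞ : 𝕏)).card_inf_stabilizer_mul_ncard_orbit
    ((0 : ZMod p) : 𝕏)
  rw [horbit, Set.ncard_range_of_injective OnePoint.coe_injective,
    Nat.card_zmod, hG.card_inf_stabilizer_infty hp, mul_comm p] at h
  exact Nat.eq_of_mul_eq_mul_right (Fact.out : p.Prime).pos h

lemma conj_ptrans_mem_range (hG : IsPSL2Like G) (hp : p ≠ 2) {g : Perm 𝕏}
    (hg : g ∈ G ⊓ stabilizer (Perm 𝕏) (∞ : 𝕏)) (a : ZMod p) :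
    g * ptrans p a * g⁻¹ ∈ (ptransHom p).range := by
  have hle : (ptransHom p).range ≤ G ⊓ stabilizer (Perm 𝕏) (∞ : 𝕏) := by
    rintro _ ⟨b, rfl⟩
    exact ⟨hG.ptrans_mem _, rfl⟩
  have hcard : Nat.card ((ptransHom p).range.subgroupOf (G ⊓ stabilizer (Perm 𝕏) (∞ : 𝕏))) = p := by
    rw [Nat.card_congr (Subgroup.subgroupOfEquivOfLe hle).toEquiv,
      ← Nat.card_congr (MonoidHom.ofInjective (ptransHom_injective (p := p))).toEquiv]
    exact Nat.card_zmod p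
  have hnormal := Subgroup.normal_of_card_eq_prime _ hcard (hG.card_inf_stabilizer_infty hp)
    (by have := (Fact.out : p.Prime).pos; omega)
  exact (Subgroup.normal_subgroupOf_iff hle).mp hnormal _ _ ⟨.ofAdd a, rfl⟩ hg

lemma map_multipliers (hG : IsPSL2Like G) (hp : p ≠ 2) :
    (multipliers G).map (unitsMulHom p) =
      G ⊓ stabilizer (Perm 𝕏) (∞ : 𝕏) ⊓ stabilizer (Perm 𝕏) ((0 : ZMod p) : 𝕏) := by
  ext g
  constructor
  · rintro ⟨u, hu, rfl⟩
    exact ⟨⟨hu, rfl⟩, by simp [Perm.smul_def]⟩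
  · intro hg
    obtain ⟨hgA, hg0⟩ := Subgroup.mem_inf.mp hg
    obtain ⟨c, hc⟩ := hG.conj_ptrans_mem_range hp hgA 1
    have hgc := apply_coe_eq_mul_of_conj_ptrans_one hg0 hc.symm
    have hc0 : c.toAdd ≠ 0 := fun h => by
      have := g.injective ((hgc 1).trans (by rw [h, zero_mul]; exact hg0.symm))
      exact one_ne_zero (OnePoint.coe_injective this)
    have : unitsMulHom p (.mk0 _ hc0) = g := by
      ext x
      induction x using OnePoint.rec
      · exact hgA.2.symm
      · simp [hgc]
    refine ⟨.mk0 _ hc0, ?_, this⟩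
    show _ ∈ multipliers G
    rw [mem_multipliers, this]
    exact hgA.1

lemma card_multipliers (hG : IsPSL2Like G) (hp : p ≠ 2) :
    Nat.card (multipliers G) = (p - 1) / 2 := by
  rw [← Subgroup.card_map_of_injective unitsMulHom_injective, hG.map_multipliers hp,
    hG.card_inf_stabilizer_infty_inf_stabilizer_zero hp]

lemma index_multipliers (hG : IsPSL2Like G) (hp : p ≠ 2) : (multipliers G).index = 2 := by
  have h := (multipliers G).card_mul_index
  rw [hG.card_multipliers hp, Nat.card_eq_fintype_card, ZMod.card_units] at h
  have hodd := Nat.odd_iff.mp ((Fact.out : p.Prime).odd_of_ne_two hp)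
  have := (Fact.out : p.Prime).two_le
  exact Nat.eq_of_mul_eq_mul_left (by omega) (h.trans (by omega))

lemma exists_mem_kbar (hG : IsPSL2Like G) : ∃ τ, τ ∈ kbar G := by
  obtain ⟨g, hg, hg0⟩ := hG.exists_apply_eq ((0 : ZMod p) : 𝕏) ∞
  obtain ⟨b, hb⟩ := OnePoint.ne_infty_iff_exists.mp fun h =>
    OnePoint.coe_ne_infty (0 : ZMod p) (g.injective (hg0.trans h.symm))
  exact ⟨ptrans p (-b) * g, mul_mem (hG.ptrans_mem _) hg, by simp [hg0], by simp [← hb]⟩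

lemma exists_unitsMulHom_eq (hG : IsPSL2Like G) (hp : p ≠ 2) {g : Perm 𝕏} (hg : g ∈ G)
    (hinf : g ∞ = ∞) (h0 : g ((0 : ZMod p) : 𝕏) = ((0 : ZMod p) : 𝕏)) :
    ∃ c ∈ multipliers G, unitsMulHom p c = g := by
  have : g ∈ (multipliers G).map (unitsMulHom p) := by
    rw [hG.map_multipliers hp]
    exact ⟨⟨hg, hinf⟩, h0⟩
  exact Subgroup.mem_map.mp this

lemma exists_eq_mul_of_mem_kbar (hG : IsPSL2Like G) (hp : p ≠ 2) {τ g : Perm 𝕏}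
    (hτ : τ ∈ kbar G) (hg : g ∈ kbar G) : ∃ c ∈ multipliers G, g = unitsMulHom p c * τ := by
  obtain ⟨c, hc, hcg⟩ := hG.exists_unitsMulHom_eq hp (mul_mem hg.1 (inv_mem hτ.1))
    (by rw [Perm.mul_apply, (inv_mem_kbar hτ).2.2, hg.2.1])
    (by rw [Perm.mul_apply, (inv_mem_kbar hτ).2.1, hg.2.2])
  exact ⟨c, hc, by rw [hcg, inv_mul_cancel_right]⟩

lemma exists_semiconjBy (hG : IsPSL2Like G) (hp : p ≠ 2) {g : Perm 𝕏} (hg : g ∈ kbar G)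
    {c : (ZMod p)ˣ} (hc : c ∈ multipliers G) :
    ∃ c' ∈ multipliers G, SemiconjBy g (unitsMulHom p c) (unitsMulHom p c') := by
  obtain ⟨c', hc', hcg⟩ := hG.exists_unitsMulHom_eq hp (mul_mem (mul_mem hg.1 hc) (inv_mem hg.1))
    (by simp only [Perm.mul_apply, (inv_mem_kbar hg).2.2, unitsMulHom_coe, mul_zero, hg.2.1])
    (by simp only [Perm.mul_apply, (inv_mem_kbar hg).2.1, unitsMulHom_infty, hg.2.2])
  exact ⟨c', hc', by rw [SemiconjBy, hcg, inv_mul_cancel_right]⟩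

lemma odd_card_multipliers (hG : IsPSL2Like G) (hp3 : p % 4 = 3) :
    Odd (Nat.card (multipliers G)) := by
  rw [hG.card_multipliers (by omega), Nat.odd_iff]
  omega

lemma neg_one_notMem_multipliers (hG : IsPSL2Like G) (hp3 : p % 4 = 3) :
    -1 ∉ multipliers G := fun h => by
  have h1 := Subgroup.eq_one_of_sq_eq_one_of_odd_card (hG.odd_card_multipliers hp3) h (by simp)
  have hchar : ringChar (ZMod p) ≠ 2 := by rw [ZMod.ringChar_zmod_n]; omega
  exact Ring.neg_one_ne_one_of_char_ne_two hchar (by simpa using congrArg Units.val h1)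

lemma neg_mem_multipliers (hG : IsPSL2Like G) (hp3 : p % 4 = 3) {u : (ZMod p)ˣ}
    (hu : u ∉ multipliers G) : -u ∈ multipliers G := by
  rw [← neg_one_mul, Subgroup.mul_mem_iff_of_index_two (hG.index_multipliers (by omega))]
  exact iff_of_false (hG.neg_one_notMem_multipliers hp3) hu

lemma neg_mul_mem_multipliers (hG : IsPSL2Like G) (hp3 : p % 4 = 3) {g : Perm 𝕏}
    (hg : g ∈ kbar G) {u v : (ZMod p)ˣ} (hu : g ((1 : ZMod p) : 𝕏) = ↑(u : ZMod p))
    (hv : g ((-1 : ZMod p) : 𝕏) = ↑(v : ZMod p)) : -(u * v) ∈ multipliers G := by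
  have hp : p ≠ 2 := by omega
  obtain ⟨z, hz⟩ := exists_apply_coe_eq_units (inv_mem_kbar hg).2.1 (inv_mem_kbar hg).2.2
    (neg_ne_zero.mpr u.ne_zero)
  have hgz : g ↑(z : ZMod p) = ↑(-(u : ZMod p)) := by rw [← hz]; exact g.apply_symm_apply _
  by_cases hzC : z ∈ multipliers G
  · obtain ⟨c, hc, hzc⟩ := hG.exists_semiconjBy hp hg hzC
    have h := hzc.apply_coe_mul hu
    rw [mul_one, hgz] at h
    have hc1 : c = -1 := by
      ext
      simpa using mul_right_cancel₀ u.ne_zero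
        ((OnePoint.coe_injective h).symm.trans (neg_one_mul _).symm)
    exact (hG.neg_one_notMem_multipliers hp3 (hc1 ▸ hc)).elim
  · obtain ⟨c, hc, hzc⟩ := hG.exists_semiconjBy hp hg (hG.neg_mem_multipliers hp3 hzC)
    have h := hzc.apply_coe_mul hv
    rw [Units.val_neg, neg_mul_neg, mul_one, hgz] at h
    have huv : -(u * v) = c * v ^ 2 := by
      ext
      push_cast
      linear_combination (v : ZMod p) * OnePoint.coe_injective h
    rw [huv]
    exact mul_mem hc (Subgroup.sq_mem_of_index_two (hG.index_multipliers hp) v)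

lemma apply_mul_apply_neg_inv (hG : IsPSL2Like G) (hp3 : p % 4 = 3) {g : Perm 𝕏}
    (hg : g ∈ kbar G) {u v s t : ZMod p} (hu : g ((1 : ZMod p) : 𝕏) = u)
    (hv : g ((-1 : ZMod p) : 𝕏) = v) (z : (ZMod p)ˣ) (hs : g ↑(z : ZMod p) = s)
    (ht : g ↑(-(z⁻¹ : (ZMod p)ˣ) : ZMod p) = t) : s * t = u * v := by
  have hp : p ≠ 2 := by omega
  by_cases hzC : z ∈ multipliers G
  · obtain ⟨c, -, hzc⟩ := hG.exists_semiconjBy hp hg hzC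
    have hzc' : SemiconjBy g (unitsMulHom p z⁻¹) (unitsMulHom p c⁻¹) := by
      simpa only [map_inv] using hzc.inv_right
    have h1 := hzc.apply_coe_mul hu
    have h2 := hzc'.apply_coe_mul hv
    rw [mul_one, hs] at h1
    rw [mul_neg_one, ht] at h2
    rw [OnePoint.coe_injective h1, OnePoint.coe_injective h2]
    linear_combination u * v * c.mul_inv
  · obtain ⟨c, -, hzc⟩ := hG.exists_semiconjBy hp hg (hG.neg_mem_multipliers hp3 hzC)
    have hzc' : SemiconjBy g (unitsMulHom p (-z)⁻¹) (unitsMulHom p c⁻¹) := by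
      simpa only [map_inv] using hzc.inv_right
    have h1 := hzc.apply_coe_mul hv
    have h2 := hzc'.apply_coe_mul hu
    rw [Units.val_neg, neg_mul_neg, mul_one, hs] at h1
    rw [inv_neg, Units.val_neg, mul_one, ht] at h2
    rw [OnePoint.coe_injective h1, OnePoint.coe_injective h2]
    linear_combination u * v * c.mul_inv

lemma orderOf_eq_two (hG : IsPSL2Like G) (hp3 : p % 4 = 3) {g : Perm 𝕏} (hg : g ∈ kbar G)
    (hnorm : IsNormalized g) : orderOf g = 2 := by
  obtain ⟨u, v, hu, hv, huv⟩ := hnorm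
  have hu0 : u ≠ 0 := by rintro rfl; simp at huv
  obtain ⟨d, hdC, hd⟩ := hG.exists_unitsMulHom_eq (by omega) (mul_mem hg.1 hg.1)
    (by rw [Perm.mul_apply, hg.2.2, hg.2.1]) (by rw [Perm.mul_apply, hg.2.1, hg.2.2])
  have hgu : g ↑u = ↑(d : ZMod p) := by
    have := DFunLike.congr_fun hd ((1 : ZMod p) : 𝕏)
    rw [unitsMulHom_coe, mul_one, Perm.mul_apply, hu] at this
    exact this.symm
  have hv' : (-((Units.mk0 u hu0)⁻¹ : (ZMod p)ˣ) : ZMod p) = v := by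
    rw [Units.val_inv_eq_inv_val, Units.val_mk0, neg_eq_iff_eq_neg,
      inv_eq_of_mul_eq_one_right (b := -v) (by linear_combination huv)]
  have hgv : g ↑(-((Units.mk0 u hu0)⁻¹ : (ZMod p)ˣ) : ZMod p) = ↑(-(d : ZMod p)) := by
    have := DFunLike.congr_fun hd ((-1 : ZMod p) : 𝕏)
    rw [unitsMulHom_coe, mul_neg_one, Perm.mul_apply, hv] at this
    rw [hv']
    exact this.symm
  have hdd := hG.apply_mul_apply_neg_inv hp3 hg hu hv (.mk0 u hu0) hgu hgv
  have hd1 : d = 1 := by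
    refine Subgroup.eq_one_of_sq_eq_one_of_odd_card (hG.odd_card_multipliers hp3) hdC ?_
    ext
    push_cast
    linear_combination -hdd + huv
  refine orderOf_eq_prime (by rw [sq, ← hd, hd1, map_one]) fun h => ?_
  exact OnePoint.coe_ne_infty (0 : ZMod p) (by rw [← hg.2.1, h, Perm.one_apply])

end IsPSL2Like

end

theorem unique_lambda_three_mod_four_general
    (p : ℕ) [Fact p.Prime] (hp3 : p % 4 = 3)
    (G : Subgroup (Equiv.Perm (OnePoint (ZMod p))))
    (htrans : ∀ x y : OnePoint (ZMod p), ∃ g ∈ G, g x = y)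
    (hcard : Nat.card G = (p ^ 3 - p) / 2)
    (htransl : ∀ a : ZMod p, ptrans p a ∈ G) :
    ∃ lam : Equiv.Perm (OnePoint (ZMod p)),
      (lam ∈ G ∧ lam (OnePoint.some (0 : ZMod p)) = OnePoint.infty ∧
        lam OnePoint.infty = OnePoint.some (0 : ZMod p) ∧
        ∃ u v : ZMod p, lam (OnePoint.some (1 : ZMod p)) = OnePoint.some u ∧
          lam (OnePoint.some (-1 : ZMod p)) = OnePoint.some v ∧ -(u * v) = 1) ∧
      orderOf lam = 2 ∧
      ∀ lam' : Equiv.Perm (OnePoint (ZMod p)),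
        (lam' ∈ G ∧ lam' (OnePoint.some (0 : ZMod p)) = OnePoint.infty ∧
          lam' OnePoint.infty = OnePoint.some (0 : ZMod p) ∧
          ∃ u v : ZMod p, lam' (OnePoint.some (1 : ZMod p)) = OnePoint.some u ∧
            lam' (OnePoint.some (-1 : ZMod p)) = OnePoint.some v ∧ -(u * v) = 1) →
        lam' = lam := by
  have hG : IsPSL2Like G := ⟨htrans, hcard, htransl⟩
  obtain ⟨τ, hτ⟩ := hG.exists_mem_kbar
  obtain ⟨x, hx⟩ := exists_apply_coe_eq_units hτ.2.1 hτ.2.2 one_ne_zero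
  obtain ⟨y, hy⟩ := exists_apply_coe_eq_units hτ.2.1 hτ.2.2 (neg_ne_zero.mpr one_ne_zero)
  obtain ⟨c, ⟨hcC, hc⟩, hc_unique⟩ := (multipliers G).existsUnique_sq_eq_of_odd_card
    (hG.odd_card_multipliers hp3) (inv_mem (hG.neg_mul_mem_multipliers hp3 hτ hx hy))
  have hlam := mul_mem_kbar hτ hcC
  have hnorm := (isNormalized_mul_iff hx hy c).mpr hc
  refine ⟨_, ⟨hlam.1, hlam.2.1, hlam.2.2, hnorm⟩, hG.orderOf_eq_two hp3 hlam hnorm, ?_⟩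
  rintro lam' ⟨hG', h0', hinf', hnorm'⟩
  obtain ⟨c', hc'C, rfl⟩ := hG.exists_eq_mul_of_mem_kbar (by omega) hτ ⟨hG', h0', hinf'⟩
  rw [hc_unique c' ⟨hc'C, (isNormalized_mul_iff hx hy c').mp hnorm'⟩]

theorem unique_lambda_three_mod_four
    (p : ℕ) [Fact p.Prime] (hp2 : p ≠ 2) (hp3 : p % 4 = 3)
    (G : Subgroup (Equiv.Perm (OnePoint (ZMod p))))
    (htrans : ∀ x y : OnePoint (ZMod p), ∃ g ∈ G, g x = y)
    (hcard : Nat.card G = (p ^ 3 - p) / 2)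
    (htransl : ∀ a : ZMod p, ptrans p a ∈ G) :
    ∃ lam : Equiv.Perm (OnePoint (ZMod p)),
      (lam ∈ G ∧ lam (OnePoint.some (0 : ZMod p)) = OnePoint.infty ∧
        lam OnePoint.infty = OnePoint.some (0 : ZMod p) ∧
        ∃ u v : ZMod p, lam (OnePoint.some (1 : ZMod p)) = OnePoint.some u ∧
          lam (OnePoint.some (-1 : ZMod p)) = OnePoint.some v ∧ -(u * v) = 1) ∧
      orderOf lam = 2 ∧
      ∀ lam' : Equiv.Perm (OnePoint (ZMod p)),
        (lam' ∈ G ∧ lam' (OnePoint.some (0 : ZMod p)) = OnePoint.infty ∧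
          lam' OnePoint.infty = OnePoint.some (0 : ZMod p) ∧
          ∃ u v : ZMod p, lam' (OnePoint.some (1 : ZMod p)) = OnePoint.some u ∧
            lam' (OnePoint.some (-1 : ZMod p)) = OnePoint.some v ∧ -(u * v) = 1) →
        lam' = lam :=
  unique_lambda_three_mod_four_general p hp3 G htrans hcard htransl
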